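/- For all α ∈ [0,1] and λ ∈ (0,1], w̃_λ^α = w_μ where μ = λ/(α + λ − λ·α). (Note μ ∈ (0,1].) -/

import Mathlib

/-!
Rescaling by `d = α + λ - λα` turns the fixed point `W̃` of `u ↦ T̃_α((1-λ) u)` into a fixed
point of `x ↦ T((1-μ) x)`, because `(1-μ) d = α (1-λ)` and `1 - (1-α)(1-λ) = d`. That map is a
`(1-μ)`-contraction, so `d • W̃ = W_μ`, and `μ d = λ` gives `λ • W̃ = μ • W_μ`.
-/

open Function

theorem LipschitzWith.contractingWith_comp_smul {E : Type*} [NormedAddCommGroup E] [NormedSpace ℝ E]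
    {T : E → E} (hT : LipschitzWith 1 T) {c : ℝ} (hc : |c| < 1) :
    ContractingWith ‖c‖₊ (fun x => T (c • x)) :=
  ⟨by rwa [← NNReal.coe_lt_coe, coe_nnnorm, Real.norm_eq_abs, NNReal.coe_one],
    one_mul ‖c‖₊ ▸ hT.comp (lipschitzWith_smul c)⟩

section AveragedMap

variable {𝕜 E : Type*} [Field 𝕜] [AddCommGroup E] [Module 𝕜 E]

/-- The map `T̃_α`. -/
def averagedMap (alpha : 𝕜) (T : E → E) (x : E) : E :=
  (1 - alpha) • x + T (alpha • x)

theorem Function.IsFixedPt.smul_of_averagedMap {T : E → E} {alpha lam : 𝕜} {W : E}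
    (hd : alpha + lam - lam * alpha ≠ 0)
    (hW : IsFixedPt (fun u => averagedMap alpha T ((1 - lam) • u)) W) :
    IsFixedPt (fun x => T ((1 - lam / (alpha + lam - lam * alpha)) • x))
      ((alpha + lam - lam * alpha) • W) := by
  have harg : (1 - lam / (alpha + lam - lam * alpha)) • (alpha + lam - lam * alpha) • W =
      alpha • (1 - lam) • W := by
    rw [smul_smul, smul_smul]
    congr 1
    field_simp
    ring
  have hT : T (alpha • (1 - lam) • W) = W - (1 - alpha) • (1 - lam) • W :=
    eq_sub_of_add_eq' hW
  change T _ = _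
  rw [harg, hT]
  module

end AveragedMap

theorem discounted_value_scaled_kernel_general
    {Z : Type*} [NormedAddCommGroup Z] [NormedSpace ℝ Z]
    (T : Z → Z) (hT : ∀ x y : Z, ‖T x - T y‖ ≤ ‖x - y‖)
    (alpha lam : ℝ) (halpha : alpha ∈ Set.Icc (0 : ℝ) 1)
    (hlam : lam ∈ Set.Ioc (0 : ℝ) 1)
    (Wt : Z)
    (hWt : (1 - alpha) • ((1 - lam) • Wt) + T (alpha • ((1 - lam) • Wt)) = Wt)
    (Wmu : Z)
    (hWmu : T ((1 - lam / (alpha + lam - lam * alpha)) • Wmu) = Wmu) :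
    lam • Wt = (lam / (alpha + lam - lam * alpha)) • Wmu := by
  obtain ⟨ha0, ha1⟩ := halpha
  obtain ⟨hl0, hl1⟩ := hlam
  have hd : 0 < alpha + lam - lam * alpha := by nlinarith
  have hmu_pos : 0 < lam / (alpha + lam - lam * alpha) := div_pos hl0 hd
  have hmu_le : lam / (alpha + lam - lam * alpha) ≤ 1 := by
    rw [div_le_one hd]
    nlinarith
  have hc : |1 - lam / (alpha + lam - lam * alpha)| < 1 := by
    rw [abs_sub_lt_iff]
    constructor <;> linarith
  have hlip : LipschitzWith 1 T :=
    LipschitzWith.mk_one fun x y => by simpa only [dist_eq_norm] using hT x y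
  have hWmu_eq : Wmu = (alpha + lam - lam * alpha) • Wt :=
    (hlip.contractingWith_comp_smul hc).fixedPoint_unique' hWmu (IsFixedPt.smul_of_averagedMap hd.ne' hWt)
  rw [hWmu_eq, smul_smul, div_mul_cancel₀ _ hd.ne']

/-- Identification of the `λ`-discounted value of `T̃_α : x ↦ (1-α) x + T(α x)`
with the `μ`-discounted value of `T`, where `μ = λ/(α + λ - λ α)`: if `W̃` is
the fixed point of `u ↦ T̃_α((1-λ) u)` and `W_μ` the fixed point of
`x ↦ T((1-μ) x)`, then `λ • W̃ = μ • W_μ`. -/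
theorem discounted_value_scaled_kernel
    {Z : Type*} [NormedAddCommGroup Z] [NormedSpace ℝ Z] [CompleteSpace Z]
    (T : Z → Z) (hT : ∀ x y : Z, ‖T x - T y‖ ≤ ‖x - y‖)
    (alpha lam : ℝ) (halpha : alpha ∈ Set.Icc (0 : ℝ) 1)
    (hlam : lam ∈ Set.Ioc (0 : ℝ) 1)
    (Wt : Z)
    (hWt : (1 - alpha) • ((1 - lam) • Wt) + T (alpha • ((1 - lam) • Wt)) = Wt)
    (Wmu : Z)
    (hWmu : T ((1 - lam / (alpha + lam - lam * alpha)) • Wmu) = Wmu) :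
    lam • Wt = (lam / (alpha + lam - lam * alpha)) • Wmu :=
  discounted_value_scaled_kernel_general T hT alpha lam halpha hlam Wt hWt Wmu hWmu
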